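/- arXiv:1410.0415 — 4 statements merged into one kernel-verified Lean document; each statement's English description precedes it below -/
import Mathlib

section
/- Let p be a prime, μ the Haar probability measure on Z_p, and j a natural number. Then ∫_{{y ∈ Z_p : p^{−j} ≤ |y|_p}} |y|_p^{−1} dμ(y) = (j+1)(p−1)/p. -/
/-!
The closed ball of radius `p⁻ⁿ` in `ℤ_[p]` is the kernel of `ℤ_[p] → ZMod (p ^ n)`, an additive
subgroup of index `pⁿ`, so translation invariance gives it measure `p⁻ⁿ`. The domain of
integration is the disjoint union of the spheres of radii `p⁻ⁱ`, `i ≤ j`; on the `i`-th sphere the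
integrand is the constant `pⁱ` and the sphere has measure `p⁻ⁱ - p⁻ⁱ⁻¹`, so each sphere
contributes `(p - 1) / p`.
-/

open MeasureTheory Metric

namespace PadicInt

variable {p : ℕ} [Fact p.Prime]

lemma closedBall_zero_eq_ker_toZModPow (n : ℕ) :
    closedBall (0 : ℤ_[p]) ((p : ℝ) ^ (-(n : ℤ))) = RingHom.ker (toZModPow n : ℤ_[p] →+* _) := by
  ext y
  rw [mem_closedBall_zero_iff, norm_le_pow_iff_mem_span_pow, ker_toZModPow]
  rfl

lemma index_ker_toZModPow (n : ℕ) :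
    (RingHom.ker (toZModPow n : ℤ_[p] →+* _)).toAddSubgroup.index = p ^ n := by
  have : NeZero (p ^ n) := ⟨pow_ne_zero n (Fact.out : p.Prime).ne_zero⟩
  rw [show (RingHom.ker (toZModPow n : ℤ_[p] →+* _)).toAddSubgroup
      = (toZModPow n : ℤ_[p] →+* _).toAddMonoidHom.ker from rfl, AddSubgroup.index_ker,
    AddMonoidHom.range_eq_top.mpr (ZMod.ringHom_surjective _)]
  simp

lemma pow_lt_norm_iff (y : ℤ_[p]) (n : ℤ) : (p : ℝ) ^ n < ‖y‖ ↔ (p : ℝ) ^ (n + 1) ≤ ‖y‖ := by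
  simpa only [not_le, not_lt] using (norm_le_pow_iff_norm_lt_pow_add_one y n).not

lemma sphere_zero_eq_closedBall_sdiff (n : ℕ) :
    sphere (0 : ℤ_[p]) ((p : ℝ) ^ (-(n : ℤ))) =
      closedBall 0 ((p : ℝ) ^ (-(n : ℤ))) \ closedBall 0 ((p : ℝ) ^ (-((n + 1 : ℕ) : ℤ))) := by
  ext y
  have : -((n + 1 : ℕ) : ℤ) + 1 = -n := by push_cast; ring
  simp only [mem_sphere_zero_iff_norm, Set.mem_sdiff, mem_closedBall_zero_iff, not_le,
    pow_lt_norm_iff, this, le_antisymm_iff]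

lemma eqOn_norm_inv_sphere_zero (n : ℕ) :
    Set.EqOn (fun y : ℤ_[p] ↦ ‖y‖⁻¹) (fun _ ↦ (p : ℝ) ^ n) (sphere 0 ((p : ℝ) ^ (-(n : ℤ)))) := by
  intro y hy
  simp_all

lemma setOf_zpow_le_norm_eq_biUnion_sphere (j : ℕ) :
    {y : ℤ_[p] | (p : ℝ) ^ (-(j : ℤ)) ≤ ‖y‖} =
      ⋃ i ∈ Finset.range (j + 1), sphere 0 ((p : ℝ) ^ (-(i : ℤ))) := by
  have hp : (1 : ℝ) < p := mod_cast (Fact.out : p.Prime).one_lt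
  ext y
  simp only [Set.mem_ofPred_eq, Set.mem_iUnion, Finset.mem_range, mem_sphere_zero_iff_norm,
    exists_prop]
  constructor
  · intro h
    have hy : y ≠ 0 := by
      rintro rfl
      rw [norm_zero] at h
      exact (zpow_pos (zero_lt_one.trans hp) _).not_ge h
    rw [norm_eq_zpow_neg_valuation hy, zpow_le_zpow_iff_right₀ hp] at h
    exact ⟨y.valuation, by omega, norm_eq_zpow_neg_valuation hy⟩
  · rintro ⟨i, hi, hy⟩
    exact hy ▸ zpow_le_zpow_right₀ hp.le (by omega)

lemma pairwise_disjoint_sphere_zero :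
    Pairwise (Function.onFun Disjoint fun n : ℕ ↦ sphere (0 : ℤ_[p]) ((p : ℝ) ^ (-(n : ℤ)))) := by
  have hp : (1 : ℝ) < p := mod_cast (Fact.out : p.Prime).one_lt
  intro m n hmn
  refine Set.disjoint_left.mpr fun y hm hn ↦ hmn ?_
  rw [mem_sphere_zero_iff_norm] at hm hn
  have := zpow_right_injective₀ (zero_lt_one.trans hp) hp.ne' (hm.symm.trans hn)
  omega

variable [MeasurableSpace ℤ_[p]] [BorelSpace ℤ_[p]] (μ : Measure ℤ_[p]) [μ.IsAddLeftInvariant]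
  [IsProbabilityMeasure μ]

lemma measureReal_closedBall_zero (n : ℕ) :
    μ.real (closedBall 0 ((p : ℝ) ^ (-(n : ℤ)))) = ((p : ℝ) ^ n)⁻¹ := by
  set H := (RingHom.ker (toZModPow n : ℤ_[p] →+* _)).toAddSubgroup
  have : H.FiniteIndex :=
    ⟨by rw [index_ker_toZModPow]; exact pow_ne_zero n (Fact.out : p.Prime).ne_zero⟩
  have hball : (H : Set ℤ_[p]) = closedBall 0 ((p : ℝ) ^ (-(n : ℤ))) :=
    (closedBall_zero_eq_ker_toZModPow n).symm
  have h := H.index_mul_measure (hball ▸ measurableSet_closedBall) μ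
  rw [index_ker_toZModPow, measure_univ, hball] at h
  have hμ : μ (closedBall 0 ((p : ℝ) ^ (-(n : ℤ)))) = ((p ^ n : ℕ) : ENNReal)⁻¹ :=
    ENNReal.eq_inv_of_mul_eq_one_left (by rwa [mul_comm] at h)
  rw [Measure.real_def, hμ, ENNReal.toReal_inv, Nat.cast_pow, ENNReal.toReal_pow,
    ENNReal.toReal_natCast]

lemma measureReal_sphere_zero (n : ℕ) :
    μ.real (sphere 0 ((p : ℝ) ^ (-(n : ℤ)))) = ((p : ℝ) ^ n)⁻¹ - ((p : ℝ) ^ (n + 1))⁻¹ := by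
  have hp : (1 : ℝ) ≤ p := mod_cast (Fact.out : p.Prime).one_le
  rw [sphere_zero_eq_closedBall_sdiff, measureReal_sdiff _ measurableSet_closedBall,
    measureReal_closedBall_zero, measureReal_closedBall_zero]
  exact closedBall_subset_closedBall (zpow_le_zpow_right₀ hp (by omega))

lemma setIntegral_sphere_zero_norm_inv (n : ℕ) :
    ∫ y in sphere 0 ((p : ℝ) ^ (-(n : ℤ))), ‖y‖⁻¹ ∂μ = ((p : ℝ) - 1) / p := by
  have hp : (p : ℝ) ≠ 0 := mod_cast (Fact.out : p.Prime).ne_zero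
  rw [setIntegral_congr_fun isClosed_sphere.measurableSet (eqOn_norm_inv_sphere_zero n),
    setIntegral_const, measureReal_sphere_zero, smul_eq_mul]
  field_simp
  ring

end PadicInt

open PadicInt in
/-- For a prime `p`, a Haar probability measure `μ` on `ℤ_p` and `j : ℕ`,
`∫_{{y ∈ ℤ_p : p^{−j} ≤ |y|}} |y|⁻¹ dμ(y) = (j+1)(p−1)/p`. -/
theorem stmt_4 (p : ℕ) [Fact p.Prime]
    [MeasurableSpace ℤ_[p]] [BorelSpace ℤ_[p]]
    (μ : Measure ℤ_[p]) [μ.IsAddHaarMeasure] (hμ : μ Set.univ = 1) (j : ℕ) :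
    ∫ y in {y : ℤ_[p] | (p : ℝ) ^ (-(j : ℤ)) ≤ ‖y‖}, ‖y‖⁻¹ ∂μ =
      ((j : ℝ) + 1) * ((p : ℝ) - 1) / p := by
  have : IsProbabilityMeasure μ := ⟨hμ⟩
  rw [setOf_zpow_le_norm_eq_biUnion_sphere,
    integral_biUnion_finset _ (fun _ _ ↦ isClosed_sphere.measurableSet)
      (pairwise_disjoint_sphere_zero.set_pairwise _)
      (fun i _ ↦ (integrableOn_const (measure_ne_top _ _)).congr_fun
        (eqOn_norm_inv_sphere_zero i).symm isClosed_sphere.measurableSet)]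
  simp only [setIntegral_sphere_zero_norm_inv, Finset.sum_const, Finset.card_range, nsmul_eq_mul]
  push_cast
  ring
end

section
/- Let p be an odd prime and μ the Haar probability measure on Z_p. Then the double integral ∫_{x ∈ Z_p} ( ∫_{{y ∈ Z_p : |1 − x²|_p ≤ |y|_p}} |y|_p^{−1} dμ(y) ) dμ(x) equals 1 + p^{−1}. -/
/-!
Write `v` for the valuation on `ℤ_[p]`. The ball `‖y‖ ≤ p⁻ⁿ` is the ideal `pⁿℤ_[p]`, a
subgroup of index `pⁿ`, so it has measure `p⁻ⁿ`, and the sphere `‖y‖ = p⁻ⁿ` has measure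
`p⁻ⁿ (1 - p⁻¹)`. On that sphere `‖y‖⁻¹ = pⁿ`, so each sphere contributes `1 - p⁻¹` to the inner
integral; for `z ≠ 0` the set `‖z‖ ≤ ‖y‖` is the union of the `v z + 1` spheres with
`n ≤ v z`, so the inner integral is `(v (1 - x²) + 1) (1 - p⁻¹)`.

Off the null set `x = ±1` we have `v (1 - x²) = v (1 - x) + v (1 + x)`. By translation
invariance both summands have the mean of `v`, which is
`∑_{n ≥ 1} μ (v ≥ n) = ∑_{n ≥ 1} p⁻ⁿ = 1 / (p - 1)`.
Hence the double integral is `(2 / (p - 1) + 1) (1 - p⁻¹) = 1 + p⁻¹`.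
-/

open MeasureTheory Metric Filter Topology ENNReal

lemma integrableOn_norm_inv_compl_closedBall {E : Type*} [NormedAddCommGroup E]
    [MeasurableSpace E] [BorelSpace E] (μ : Measure E) [IsFiniteMeasure μ] {r : ℝ}
    (hr : 0 < r) : IntegrableOn (fun y => ‖y‖⁻¹) (closedBall 0 r)ᶜ μ := by
  refine Measure.integrableOn_of_bounded (M := r⁻¹) (measure_ne_top _ _)
    continuous_norm.measurable.inv.aestronglyMeasurable ?_
  filter_upwards [ae_restrict_mem isClosed_closedBall.measurableSet.compl] with y hy
  rw [Set.mem_compl_iff, mem_closedBall_zero_iff, not_le] at hy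
  rw [norm_inv, norm_norm]
  exact inv_anti₀ hr hy.le

namespace PadicInt

variable {p : ℕ} [hp : Fact p.Prime]

-- Through `IsAddHaarMeasure.nullSingletonClass`, this makes Haar measures on `ℤ_[p]` atomless.
instance nhdsNE_zero_neBot : (𝓝[≠] (0 : ℤ_[p])).NeBot := by
  have hp₀ : (p : ℤ_[p]) ≠ 0 := Nat.cast_ne_zero.mpr hp.out.ne_zero
  have hnorm : ‖(p : ℤ_[p])‖ < 1 := by
    rw [norm_p]
    exact inv_lt_one_of_one_lt₀ (by exact_mod_cast hp.out.one_lt)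
  exact (tendsto_nhdsWithin_of_tendsto_nhds_of_eventually_within _
    (tendsto_pow_atTop_nhds_zero_of_norm_lt_one hnorm)
    (Eventually.of_forall fun n => pow_ne_zero n hp₀)).neBot

lemma inv_natCast_lt_one : (p : ℝ≥0∞)⁻¹ < 1 :=
  ENNReal.inv_lt_one.mpr (by exact_mod_cast hp.out.one_lt)

lemma norm_eq_zpow_neg_iff_valuation_eq {x : ℤ_[p]} (hx : x ≠ 0) (n : ℕ) :
    ‖x‖ = (p : ℝ) ^ (-n : ℤ) ↔ x.valuation = n := by
  have hp₁ : (1 : ℝ) < p := by exact_mod_cast hp.out.one_lt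
  rw [norm_eq_zpow_neg_valuation hx, (zpow_right_injective₀ (by positivity) hp₁.ne').eq_iff]
  omega

lemma valuation_neg (x : ℤ_[p]) : (-x).valuation = x.valuation := by
  rcases eq_or_ne x 0 with rfl | hx
  · simp
  · rw [← norm_eq_zpow_neg_iff_valuation_eq (neg_ne_zero.mpr hx), norm_neg,
      norm_eq_zpow_neg_valuation hx]

lemma closedBall_zero_zpow_eq_span (n : ℕ) :
    closedBall (0 : ℤ_[p]) ((p : ℝ) ^ (-n : ℤ)) = Ideal.span {(p : ℤ_[p]) ^ n} := by
  ext y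
  rw [mem_closedBall_zero_iff, norm_le_pow_iff_mem_span_pow]
  rfl

lemma index_span_pow (n : ℕ) :
    (Ideal.span {(p : ℤ_[p]) ^ n}).toAddSubgroup.index = p ^ n := by
  rw [← ker_toZModPow]
  have hsurj := ZMod.ringHom_surjective (toZModPow n : ℤ_[p] →+* ZMod (p ^ n))
  have h := AddSubgroup.index_ker (toZModPow n : ℤ_[p] →+* ZMod (p ^ n)).toAddMonoidHom
  rwa [AddMonoidHom.range_eq_top.mpr hsurj, AddSubgroup.card_top, Nat.card_zmod] at h

lemma closedBall_zero_one : closedBall (0 : ℤ_[p]) 1 = Set.univ :=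
  Set.eq_univ_of_forall fun y => mem_closedBall_zero_iff.mpr (norm_le_one y)

lemma closedBall_zero_zpow_succ_subset (n : ℕ) :
    closedBall (0 : ℤ_[p]) ((p : ℝ) ^ (-(n + 1 : ℕ) : ℤ)) ⊆
      closedBall 0 ((p : ℝ) ^ (-n : ℤ)) :=
  closedBall_subset_closedBall
    (zpow_le_zpow_right₀ (by exact_mod_cast hp.out.one_le) (by omega))

lemma closedBall_diff_closedBall_succ_eq_sphere (n : ℕ) :
    closedBall (0 : ℤ_[p]) ((p : ℝ) ^ (-n : ℤ)) \
        closedBall 0 ((p : ℝ) ^ (-(n + 1 : ℕ) : ℤ)) =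
      sphere 0 ((p : ℝ) ^ (-n : ℤ)) := by
  ext y
  rw [Set.mem_sdiff, mem_closedBall_zero_iff, mem_closedBall_zero_iff,
    mem_sphere_zero_iff_norm, show (-(n + 1 : ℕ) : ℤ) = -n - 1 by push_cast; ring,
    norm_le_pow_iff_norm_lt_pow_add_one y (-n - 1), sub_add_cancel, not_lt, le_antisymm_iff]

lemma valuation_eq_tsum_indicator {x : ℤ_[p]} (hx : x ≠ 0) :
    (x.valuation : ℝ≥0∞) =
      ∑' j : ℕ, (closedBall (0 : ℤ_[p]) ((p : ℝ) ^ (-(j + 1 : ℕ) : ℤ))).indicator 1 x := by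
  have hterm : ∀ j : ℕ,
      (closedBall (0 : ℤ_[p]) ((p : ℝ) ^ (-(j + 1 : ℕ) : ℤ))).indicator
          (1 : ℤ_[p] → ℝ≥0∞) x = if j < x.valuation then 1 else 0 := by
    intro j
    classical
    rw [Set.indicator_apply]
    simp only [mem_closedBall_zero_iff, norm_le_pow_iff_le_valuation x hx, Nat.succ_le_iff,
      Pi.one_apply]
  rw [tsum_congr hterm, tsum_eq_sum (s := Finset.range x.valuation)
      (fun j hj => if_neg (by simpa using hj)),
    Finset.sum_ite_of_true (fun j hj => Finset.mem_range.mp hj)]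
  simp

section Measure

variable [MeasurableSpace ℤ_[p]] [BorelSpace ℤ_[p]] (μ : Measure ℤ_[p])

lemma measurable_valuation : Measurable (valuation : ℤ_[p] → ℕ) := by
  refine measurable_to_countable' fun n => ?_
  have hfiber : valuation ⁻¹' {n} =
      sphere (0 : ℤ_[p]) ((p : ℝ) ^ (-n : ℤ)) ∪ ({0} ∩ valuation ⁻¹' {n}) := by
    ext x
    rcases eq_or_ne x 0 with rfl | hx
    · have hpos : (0 : ℝ) < (p : ℝ) ^ (-n : ℤ) := zpow_pos (by exact_mod_cast hp.out.pos) _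
      simp only [Set.mem_preimage, Set.mem_singleton_iff, Set.mem_union, Set.mem_inter_iff,
        mem_sphere_zero_iff_norm, norm_zero, hpos.ne, false_or, true_and]
    · simp only [Set.mem_preimage, Set.mem_singleton_iff, Set.mem_union, Set.mem_inter_iff,
        hx, false_and, or_false, mem_sphere_zero_iff_norm, norm_eq_zpow_neg_iff_valuation_eq hx]
  rw [hfiber]
  exact isClosed_sphere.measurableSet.union
    (Set.subsingleton_singleton.anti Set.inter_subset_left).measurableSet

lemma measurable_natCast_valuation : Measurable fun x : ℤ_[p] => (x.valuation : ℝ≥0∞) :=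
  measurable_from_nat.comp measurable_valuation

variable [μ.IsAddLeftInvariant] [IsProbabilityMeasure μ]

lemma measure_closedBall_zero_zpow (n : ℕ) :
    μ (closedBall 0 ((p : ℝ) ^ (-n : ℤ))) = (p : ℝ≥0∞)⁻¹ ^ n := by
  have : (Ideal.span {(p : ℤ_[p]) ^ n}).toAddSubgroup.FiniteIndex :=
    ⟨by rw [index_span_pow]; exact pow_ne_zero n hp.out.ne_zero⟩
  have h := AddSubgroup.index_mul_measure (Ideal.span {(p : ℤ_[p]) ^ n}).toAddSubgroup
    (closedBall_zero_zpow_eq_span (p := p) n ▸ measurableSet_closedBall) μ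
  rw [index_span_pow, measure_univ, Nat.cast_pow, mul_comm] at h
  rw [closedBall_zero_zpow_eq_span, ← ENNReal.inv_pow]
  exact ENNReal.eq_inv_of_mul_eq_one_left h

lemma measureReal_closedBall_zero_zpow (n : ℕ) :
    μ.real (closedBall 0 ((p : ℝ) ^ (-n : ℤ))) = (p : ℝ)⁻¹ ^ n := by
  rw [measureReal_def, measure_closedBall_zero_zpow, toReal_pow, toReal_inv, toReal_natCast]

lemma measureReal_sphere_zero_zpow (n : ℕ) :
    μ.real (sphere 0 ((p : ℝ) ^ (-n : ℤ))) = (p : ℝ)⁻¹ ^ n - (p : ℝ)⁻¹ ^ (n + 1) := by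
  rw [← closedBall_diff_closedBall_succ_eq_sphere,
    measureReal_sdiff (closedBall_zero_zpow_succ_subset n) measurableSet_closedBall,
    measureReal_closedBall_zero_zpow, measureReal_closedBall_zero_zpow]

lemma setIntegral_sphere_zero_zpow_norm_inv (n : ℕ) :
    ∫ y in sphere (0 : ℤ_[p]) ((p : ℝ) ^ (-n : ℤ)), ‖y‖⁻¹ ∂μ = 1 - (p : ℝ)⁻¹ := by
  have hp₀ : (p : ℝ) ≠ 0 := by exact_mod_cast hp.out.ne_zero
  rw [setIntegral_congr_fun isClosed_sphere.measurableSet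
      fun y hy => by rw [mem_sphere_zero_iff_norm.mp hy],
    setIntegral_const, measureReal_sphere_zero_zpow, smul_eq_mul, zpow_neg, zpow_natCast,
    inv_inv, inv_pow, inv_pow]
  field_simp
  ring

lemma setIntegral_compl_closedBall_zero_zpow_norm_inv (n : ℕ) :
    ∫ y in (closedBall (0 : ℤ_[p]) ((p : ℝ) ^ (-n : ℤ)))ᶜ, ‖y‖⁻¹ ∂μ =
      n * (1 - (p : ℝ)⁻¹) := by
  induction n with
  | zero => simp [closedBall_zero_one]
  | succ n ih =>
    have hsplit : (closedBall (0 : ℤ_[p]) ((p : ℝ) ^ (-(n + 1 : ℕ) : ℤ)))ᶜ =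
        (closedBall 0 ((p : ℝ) ^ (-n : ℤ)))ᶜ ∪ sphere 0 ((p : ℝ) ^ (-n : ℤ)) := by
      rw [← closedBall_diff_closedBall_succ_eq_sphere]
      ext y
      have := @closedBall_zero_zpow_succ_subset p _ n y
      simp only [Set.mem_compl_iff, Set.mem_union, Set.mem_sdiff]
      tauto
    have hpos : ∀ k : ℕ, (0 : ℝ) < (p : ℝ) ^ (-k : ℤ) := fun k =>
      zpow_pos (by exact_mod_cast hp.out.pos) _
    rw [hsplit, setIntegral_union
        (Set.disjoint_compl_left_iff_subset.mpr sphere_subset_closedBall)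
        isClosed_sphere.measurableSet (integrableOn_norm_inv_compl_closedBall μ (hpos n))
        ((integrableOn_norm_inv_compl_closedBall μ (hpos (n + 1))).mono_set
          (hsplit ▸ Set.subset_union_right)),
      ih, setIntegral_sphere_zero_zpow_norm_inv]
    push_cast
    ring

lemma setIntegral_norm_inv_of_norm_le {z : ℤ_[p]} (hz : z ≠ 0) :
    ∫ y in {y | ‖z‖ ≤ ‖y‖}, ‖y‖⁻¹ ∂μ = (z.valuation + 1) * (1 - (p : ℝ)⁻¹) := by
  have hset : {y : ℤ_[p] | ‖z‖ ≤ ‖y‖} =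
      (closedBall 0 ((p : ℝ) ^ (-(z.valuation + 1 : ℕ) : ℤ)))ᶜ := by
    ext y
    rw [Set.mem_ofPred_eq, Set.mem_compl_iff, mem_closedBall_zero_iff,
      norm_eq_zpow_neg_valuation hz, show (-(z.valuation + 1 : ℕ) : ℤ) = -z.valuation - 1 by
        push_cast; ring,
      norm_le_pow_iff_norm_lt_pow_add_one, sub_add_cancel, not_lt]
  rw [hset, setIntegral_compl_closedBall_zero_zpow_norm_inv]
  push_cast
  ring

lemma setIntegral_norm_inv_of_norm_one_sub_sq_le {x : ℤ_[p]} (h₁ : x ≠ 1) (h₂ : x ≠ -1) :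
    ∫ y in {y | ‖1 - x ^ 2‖ ≤ ‖y‖}, ‖y‖⁻¹ ∂μ =
      ((1 - x).valuation + (1 + x).valuation + 1) * (1 - (p : ℝ)⁻¹) := by
  have hsub : 1 - x ≠ 0 := sub_ne_zero.mpr h₁.symm
  have hadd : 1 + x ≠ 0 := fun h => h₂ (by linear_combination h)
  rw [show 1 - x ^ 2 = (1 - x) * (1 + x) by ring,
    setIntegral_norm_inv_of_norm_le μ (mul_ne_zero hsub hadd), valuation_mul hsub hadd]
  push_cast
  ring

variable [NullSingletonClass μ]

lemma lintegral_valuation :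
    ∫⁻ x, (x.valuation : ℝ≥0∞) ∂μ = (p : ℝ≥0∞)⁻¹ * (1 - (p : ℝ≥0∞)⁻¹)⁻¹ := by
  calc ∫⁻ x, (x.valuation : ℝ≥0∞) ∂μ
      = ∫⁻ x, ∑' j : ℕ,
          (closedBall (0 : ℤ_[p]) ((p : ℝ) ^ (-(j + 1 : ℕ) : ℤ))).indicator 1 x ∂μ := by
        refine lintegral_congr_ae ?_
        filter_upwards [compl_mem_ae_iff.mpr (measure_singleton (μ := μ) 0)] with x hx
        exact valuation_eq_tsum_indicator hx
    _ = ∑' j : ℕ, (p : ℝ≥0∞)⁻¹ ^ (j + 1) := by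
        rw [lintegral_tsum fun j =>
          (measurable_one.indicator measurableSet_closedBall).aemeasurable]
        simp_rw [lintegral_indicator_one measurableSet_closedBall,
          measure_closedBall_zero_zpow]
    _ = _ := ENNReal.tsum_geometric_add_one _

lemma integrable_valuation : Integrable (fun x : ℤ_[p] => (x.valuation : ℝ)) μ := by
  simpa using integrable_toReal_of_lintegral_ne_top
    measurable_natCast_valuation.aemeasurable
    (lintegral_valuation μ ▸ ENNReal.mul_ne_top (by simp [hp.out.ne_zero])
      (ENNReal.inv_ne_top.mpr (tsub_pos_of_lt inv_natCast_lt_one).ne'))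

lemma integral_valuation : ∫ x, (x.valuation : ℝ) ∂μ = ((p : ℝ) - 1)⁻¹ := by
  have h := integral_toReal (μ := μ) measurable_natCast_valuation.aemeasurable
    (ae_of_all _ fun x => natCast_lt_top x.valuation)
  simp only [toReal_natCast] at h
  have hp₀ : (p : ℝ) ≠ 0 := by exact_mod_cast hp.out.ne_zero
  rw [h, lintegral_valuation, toReal_mul, toReal_inv, toReal_inv,
    toReal_sub_of_le inv_natCast_lt_one.le one_ne_top, toReal_one, toReal_inv,
    toReal_natCast]
  field_simp

lemma integrable_valuation_add_left (c : ℤ_[p]) :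
    Integrable (fun x : ℤ_[p] => ((c + x).valuation : ℝ)) μ :=
  (integrable_valuation μ).comp_add_left c

lemma integral_valuation_add_left (c : ℤ_[p]) :
    ∫ x, ((c + x).valuation : ℝ) ∂μ = ((p : ℝ) - 1)⁻¹ := by
  rw [integral_add_left_eq_self (fun x : ℤ_[p] => (x.valuation : ℝ)), integral_valuation]

lemma integrable_valuation_sub_left (c : ℤ_[p]) :
    Integrable (fun x : ℤ_[p] => ((c - x).valuation : ℝ)) μ := by
  simp_rw [← valuation_neg (c - _), neg_sub]
  exact (integrable_valuation μ).comp_sub_right c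

lemma integral_valuation_sub_left (c : ℤ_[p]) :
    ∫ x, ((c - x).valuation : ℝ) ∂μ = ((p : ℝ) - 1)⁻¹ := by
  simp_rw [← valuation_neg (c - _), neg_sub]
  rw [integral_sub_right_eq_self (fun x : ℤ_[p] => (x.valuation : ℝ)), integral_valuation]

end Measure

end PadicInt

theorem stmt_5_general (p : ℕ) [Fact p.Prime]
    [MeasurableSpace ℤ_[p]] [BorelSpace ℤ_[p]]
    (μ : Measure ℤ_[p]) [μ.IsAddHaarMeasure] (hμ : μ Set.univ = 1) :
    ∫ x : ℤ_[p], (∫ y in {y : ℤ_[p] | ‖1 - x ^ 2‖ ≤ ‖y‖}, ‖y‖⁻¹ ∂μ) ∂μ =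
      1 + (p : ℝ)⁻¹ := by
  have : IsProbabilityMeasure μ := ⟨hμ⟩
  have hinner : (fun x : ℤ_[p] => ∫ y in {y : ℤ_[p] | ‖1 - x ^ 2‖ ≤ ‖y‖}, ‖y‖⁻¹ ∂μ) =ᵐ[μ]
      fun x => ((1 - x).valuation + (1 + x).valuation + 1) * (1 - (p : ℝ)⁻¹) := by
    filter_upwards [compl_mem_ae_iff.mpr ((Set.toFinite {1, -1}).measure_zero μ)]
      with x hx
    simp only [Set.mem_compl_iff, Set.mem_insert_iff, Set.mem_singleton_iff, not_or] at hx
    exact PadicInt.setIntegral_norm_inv_of_norm_one_sub_sq_le μ hx.1 hx.2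
  have hsub := PadicInt.integrable_valuation_sub_left μ 1
  have hadd := PadicInt.integrable_valuation_add_left μ 1
  have hp₀ : (p : ℝ) ≠ 0 := by exact_mod_cast (Fact.out : p.Prime).ne_zero
  have hp₁ : (p : ℝ) - 1 ≠ 0 :=
    sub_ne_zero.mpr (by exact_mod_cast (Fact.out : p.Prime).one_lt.ne')
  rw [integral_congr_ae hinner, integral_mul_const, integral_add _ (integrable_const _),
    integral_add hsub hadd, PadicInt.integral_valuation_sub_left,
    PadicInt.integral_valuation_add_left, integral_const, probReal_univ, one_smul]
  · field_simp
    ring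
  · exact hsub.add hadd

/-- For an odd prime `p` and a Haar probability measure `μ` on `ℤ_p`,
`∫_{x ∈ ℤ_p} ( ∫_{{y ∈ ℤ_p : |1 − x²| ≤ |y|}} |y|⁻¹ dμ(y) ) dμ(x) = 1 + p⁻¹`. -/
theorem stmt_5 (p : ℕ) [Fact p.Prime] (hodd : p ≠ 2)
    [MeasurableSpace ℤ_[p]] [BorelSpace ℤ_[p]]
    (μ : Measure ℤ_[p]) [μ.IsAddHaarMeasure] (hμ : μ Set.univ = 1) :
    ∫ x : ℤ_[p], (∫ y in {y : ℤ_[p] | ‖1 - x ^ 2‖ ≤ ‖y‖}, ‖y‖⁻¹ ∂μ) ∂μ =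
      1 + (p : ℝ)⁻¹ :=
  stmt_5_general p μ hμ
end

section
/- Let p be a prime. The Fourier transform on Q_p (with respect to the standard additive character and the Haar measure giving Z_p volume 1) of the function x ↦ val_p(x)·1_{Z_p}(x) is the function ξ ↦ (1 − p^{−1})^{−1} · min{ p^{−1}, |ξ|_p^{−1} }. -/
/-!
For `x ≠ 0` one has `val_p(x) · 1_{ℤ_p}(x) = ∑_{n ≥ 1} 1_{p^n ℤ_p}(x)`, so the transform is
`∑_{n ≥ 1} ∫_{p^n ℤ_p} ψ(ξx) dx`; sum and integral may be exchanged because `|ψ| = 1` and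
`vol(p^n ℤ_p) = p^{-n}` is summable. The character `x ↦ ψ(ξx)` is trivial on `p^n ℤ_p` exactly
when `|ξ| ≤ p^n`: then the `n`-th integral is `p^{-n}`, and otherwise it vanishes, since a
nontrivial character integrates to zero over a compact subgroup. What is left is the geometric
series `∑ p^{-n}` over `n ≥ max(1, log_p |ξ|)`.
-/

open MeasureTheory Metric

theorem hasSum_ite_le_pow_add_one {r : ℝ} (hr₀ : 0 ≤ r) (hr₁ : r < 1) (t : ℕ) :
    HasSum (fun n : ℕ => if t ≤ n then r ^ (n + 1) else 0) (r ^ (t + 1) * (1 - r)⁻¹) := by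
  rw [← hasSum_nat_add_iff' t,
    sub_eq_self.2 (Finset.sum_eq_zero fun i hi => if_neg (by simpa using hi))]
  refine ((hasSum_geometric_of_lt_one hr₀ hr₁).mul_left (r ^ (t + 1))).congr_fun fun n => ?_
  rw [if_pos (Nat.le_add_left t n), ← pow_add]
  ring_nf

namespace AddChar

variable {G : Type*} [AddGroup G]

theorem isLocallyConstant_of_map_eq_one [TopologicalSpace G] [IsTopologicalAddGroup G]
    {M : Type*} [Monoid M] (χ : AddChar G M) (U : OpenAddSubgroup G)
    (hχ : ∀ x ∈ U, χ x = 1) : IsLocallyConstant χ := by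
  refine (IsLocallyConstant.iff_eventually_eq χ).2 fun x => ?_
  have hU : (· - x) ⁻¹' (U : Set G) ∈ nhds x :=
    (U.isOpen.preimage (continuous_sub_right x)).mem_nhds (by simp)
  filter_upwards [hU] with y hy
  rw [← sub_add_cancel y x, map_add_eq_mul, hχ _ hy, one_mul]

theorem norm_apply_eq_one_of_nsmul (χ : AddChar G ℂ) {x : G} {n : ℕ} (hn : n ≠ 0)
    (hx : χ (n • x) = 1) : ‖χ x‖ = 1 :=
  Complex.norm_eq_one_of_pow_eq_one (by rwa [← map_nsmul_eq_pow]) hn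

theorem setIntegral_addSubgroup_eq_zero [MeasurableSpace G] [MeasurableAdd G] {μ : Measure G}
    [μ.IsAddLeftInvariant] (χ : AddChar G ℂ) (H : AddSubgroup G) {y : G} (hy : y ∈ H)
    (hχy : χ y ≠ 1) : ∫ x in (H : Set G), χ x ∂μ = 0 := by
  have hH : (y + ·) ⁻¹' (H : Set G) = H := by
    ext x
    simp [H.add_mem_cancel_left hy]
  have hshift : ∫ x in (H : Set G), χ x ∂μ = χ y * ∫ x in (H : Set G), χ x ∂μ :=
    calc ∫ x in (H : Set G), χ x ∂μ = ∫ x in (H : Set G), χ x ∂μ.map (y + ·) := by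
          rw [map_add_left_eq_self]
      _ = ∫ x in (y + ·) ⁻¹' (H : Set G), χ (y + x) ∂μ :=
          setIntegral_map_equiv (MeasurableEquiv.addLeft y) _ _
      _ = χ y * ∫ x in (H : Set G), χ x ∂μ := by
          simp only [hH, map_add_eq_mul, integral_const_mul]
  have h := sub_eq_zero.2 hshift
  rw [← one_sub_mul, mul_eq_zero, sub_eq_zero] at h
  exact h.resolve_left (Ne.symm hχy)

end AddChar

namespace Padic

variable {p : ℕ} [Fact p.Prime]

theorem mem_closedBall_zpow_iff {x : ℚ_[p]} (hx : x ≠ 0) (n : ℤ) :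
    x ∈ closedBall (0 : ℚ_[p]) ((p : ℝ) ^ (-n)) ↔ n ≤ x.valuation := by
  rw [mem_closedBall_zero_iff, norm_eq_zpow_neg_valuation hx,
    zpow_le_zpow_iff_right₀ (mod_cast (Fact.out : p.Prime).one_lt), neg_le_neg_iff]

theorem closedBall_one_eq_biUnion (n : ℕ) :
    closedBall (0 : ℚ_[p]) 1 =
      ⋃ c ∈ Finset.range (p ^ n), closedBall (c : ℚ_[p]) ((p : ℝ) ^ (-n : ℤ)) := by
  ext x
  simp only [Set.mem_iUnion, Finset.mem_range, exists_prop]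
  constructor
  · intro hx
    let z : ℤ_[p] := ⟨x, by simpa using hx⟩
    refine ⟨z.appr n, z.appr_lt n, ?_⟩
    have := (z - z.appr n).norm_le_pow_iff_mem_span_pow n |>.2 (z.appr_spec n)
    simpa [mem_closedBall, dist_eq_norm, PadicInt.norm_def] using this
  · rintro ⟨c, -, hxc⟩
    have hc : (0 : ℚ_[p]) ∈ closedBall (c : ℚ_[p]) 1 := by
      simpa using norm_int_le_one (p := p) c
    have hr : (p : ℝ) ^ (-n : ℤ) ≤ 1 :=
      zpow_le_one_of_nonpos₀ (mod_cast (Fact.out : p.Prime).one_lt.le) (by simp)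
    rw [← IsUltrametricDist.closedBall_eq_of_mem hc]
    exact closedBall_subset_closedBall hr hxc

theorem pairwiseDisjoint_closedBall_natCast (n : ℕ) :
    (Finset.range (p ^ n) : Set ℕ).PairwiseDisjoint
      fun c => closedBall (c : ℚ_[p]) ((p : ℝ) ^ (-n : ℤ)) := by
  intro c hc c' hc' hne
  refine (IsUltrametricDist.closedBall_eq_or_disjoint _ _ _).resolve_left fun heq => hne ?_
  have hmem : (c : ℚ_[p]) ∈ closedBall (c' : ℚ_[p]) ((p : ℝ) ^ (-n : ℤ)) :=
    heq ▸ mem_closedBall_self (by positivity)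
  rw [mem_closedBall, dist_eq_norm] at hmem
  have hdvd : ((p ^ n : ℕ) : ℤ) ∣ (c : ℤ) - c' := by
    push_cast
    rw [← norm_int_le_pow_iff_dvd]
    exact_mod_cast hmem
  simp only [Finset.coe_range, Set.mem_Iio] at hc hc'
  exact Nat.ModEq.eq_of_lt_of_lt (Nat.modEq_iff_dvd.2 hdvd).symm hc hc'

theorem exists_nsmul_norm_le_one (x : ℚ_[p]) : ∃ n : ℕ, n ≠ 0 ∧ ‖n • x‖ ≤ 1 := by
  have hp : (1 : ℝ) < p := mod_cast (Fact.out : p.Prime).one_lt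
  obtain ⟨k, hk⟩ := pow_unbounded_of_one_lt ‖x‖ hp
  refine ⟨p ^ k, pow_ne_zero _ (Fact.out : p.Prime).ne_zero, ?_⟩
  rw [nsmul_eq_mul, norm_mul, Nat.cast_pow, norm_p_pow, zpow_neg, zpow_natCast,
    inv_mul_le_iff₀ (pow_pos (zero_lt_one.trans hp) k), mul_one]
  exact hk.le

theorem norm_addChar_eq_one (χ : AddChar ℚ_[p] ℂ) (hχ : ∀ x : ℚ_[p], ‖x‖ ≤ 1 → χ x = 1)
    (x : ℚ_[p]) : ‖χ x‖ = 1 := by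
  obtain ⟨n, hn, hnx⟩ := exists_nsmul_norm_le_one x
  exact χ.norm_apply_eq_one_of_nsmul hn (hχ _ hnx)

theorem continuous_addChar {M : Type*} [Monoid M] [TopologicalSpace M] (χ : AddChar ℚ_[p] M)
    (hχ : ∀ x : ℚ_[p], ‖x‖ ≤ 1 → χ x = 1) : Continuous χ :=
  (χ.isLocallyConstant_of_map_eq_one (IsUltrametricDist.closedBall_openAddSubgroup ℚ_[p] one_pos)
    fun x hx => hχ x (mem_closedBall_zero_iff.1 hx)).continuous

open Classical in
theorem ite_valuation_eq_tsum_indicator (x : ℚ_[p]) :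
    (if ‖x‖ ≤ 1 ∧ x ≠ 0 then (x.valuation : ℂ) else 0) =
      ∑' n : ℕ, (closedBall (0 : ℚ_[p]) ((p : ℝ) ^ (-((n + 1 : ℕ) : ℤ)))).indicator 1 x := by
  rcases eq_or_ne x 0 with rfl | hx
  · -- every term is `1`, so the series diverges and `tsum` takes its junk value `0`
    have hdiv : ¬ Summable fun _ : ℕ => (1 : ℂ) := by simp [summable_const_iff]
    have h0 (n : ℕ) :
        (closedBall (0 : ℚ_[p]) ((p : ℝ) ^ (-((n + 1 : ℕ) : ℤ)))).indicator 1 0 = (1 : ℂ) :=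
      Set.indicator_of_mem (mem_closedBall_self (by positivity)) _
    rw [tsum_congr h0, tsum_eq_zero_of_not_summable hdiv]
    simp
  · have hterm (n : ℕ) :
        (closedBall (0 : ℚ_[p]) ((p : ℝ) ^ (-((n + 1 : ℕ) : ℤ)))).indicator 1 x =
          if n ∈ Finset.range x.valuation.toNat then (1 : ℂ) else 0 := by
      simp only [Set.indicator, mem_closedBall_zpow_iff hx, Finset.mem_range, Int.lt_toNat,
        Nat.cast_succ, Int.add_one_le_iff, Pi.one_apply]
    rw [tsum_congr hterm, tsum_eq_sum (s := Finset.range x.valuation.toNat) (by simp_all),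
      Finset.sum_ite_mem, Finset.inter_self, Finset.sum_const, Finset.card_range, nsmul_one]
    split_ifs with h
    · rw [← Int.cast_natCast, Int.toNat_of_nonneg ((norm_le_one_iff_val_nonneg x).1 h.1)]
    · have hv : x.valuation ≤ 0 :=
        (not_le.1 fun hv => h ⟨(norm_le_one_iff_val_nonneg x).2 hv, hx⟩).le
      simp [Int.toNat_eq_zero.2 hv]

theorem hasSum_ite_norm_le_zpow {ξ : ℚ_[p]} (hξ : ξ ≠ 0) :
    HasSum (fun n : ℕ => if ‖ξ‖ ≤ (p : ℝ) ^ ((n + 1 : ℕ) : ℤ)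
        then (p : ℝ) ^ (-((n + 1 : ℕ) : ℤ)) else 0)
      ((1 - (p : ℝ)⁻¹)⁻¹ * min (p : ℝ)⁻¹ ‖ξ‖⁻¹) := by
  have hp : (1 : ℝ) < p := mod_cast (Fact.out : p.Prime).one_lt
  set t := (-ξ.valuation - 1).toNat
  have hle (n : ℕ) : ‖ξ‖ ≤ (p : ℝ) ^ ((n + 1 : ℕ) : ℤ) ↔ t ≤ n := by
    rw [norm_eq_zpow_neg_valuation hξ, zpow_le_zpow_iff_right₀ hp]
    omega
  have hmin : min (p : ℝ)⁻¹ ‖ξ‖⁻¹ = (p : ℝ)⁻¹ ^ (t + 1) := by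
    rw [norm_eq_zpow_neg_valuation hξ, ← zpow_neg, neg_neg, ← zpow_neg_one,
      ← (zpow_right_mono₀ hp.le).map_min, ← zpow_natCast, ← zpow_mul]
    congr 1
    omega
  rw [hmin, mul_comm]
  refine (hasSum_ite_le_pow_add_one (inv_nonneg.2 (by positivity))
    (inv_lt_one_of_one_lt₀ hp) t).congr_fun fun n => ?_
  simp only [hle, inv_pow, zpow_neg]
  norm_cast

section Haar

variable [MeasurableSpace ℚ_[p]] [BorelSpace ℚ_[p]] (μ : Measure ℚ_[p]) [μ.IsAddHaarMeasure]

theorem natCast_pow_mul_measure_closedBall (n : ℕ) :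
    (p : ENNReal) ^ n * μ (closedBall 0 ((p : ℝ) ^ (-n : ℤ))) = μ (closedBall 0 1) := by
  rw [closedBall_one_eq_biUnion n, measure_biUnion_finset (pairwiseDisjoint_closedBall_natCast n)
    fun _ _ => measurableSet_closedBall]
  simp [Measure.addHaar_closedBall_center]

theorem measureReal_closedBall_zpow (hμ : μ (closedBall 0 1) = 1) (n : ℕ) :
    μ.real (closedBall (0 : ℚ_[p]) ((p : ℝ) ^ (-n : ℤ))) = (p : ℝ) ^ (-n : ℤ) := by
  have h := natCast_pow_mul_measure_closedBall μ n
  rw [hμ, mul_comm] at h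
  rw [measureReal_def, ENNReal.eq_inv_of_mul_eq_one_left h]
  simp

theorem setIntegral_addChar_mul_closedBall (χ : AddChar ℚ_[p] ℂ)
    (hχ : ∀ x : ℚ_[p], ‖x‖ ≤ 1 → χ x = 1) (hχ' : ∃ x : ℚ_[p], ‖x‖ ≤ p ∧ χ x ≠ 1)
    {ξ : ℚ_[p]} (hξ : ξ ≠ 0) (n : ℤ) :
    ∫ x in closedBall 0 ((p : ℝ) ^ (-n)), χ (ξ * x) ∂μ =
      if ‖ξ‖ ≤ (p : ℝ) ^ n then μ.real (closedBall 0 ((p : ℝ) ^ (-n))) else 0 := by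
  have hp : (0 : ℝ) < p := mod_cast (Fact.out : p.Prime).pos
  split_ifs with hξn
  · have hχξ : Set.EqOn (fun x => χ (ξ * x)) 1 (closedBall 0 ((p : ℝ) ^ (-n))) := by
      refine fun x hx => hχ _ ?_
      rw [mem_closedBall_zero_iff] at hx
      calc ‖ξ * x‖ = ‖ξ‖ * ‖x‖ := norm_mul ξ x
        _ ≤ (p : ℝ) ^ n * (p : ℝ) ^ (-n) := by gcongr
        _ = 1 := by rw [← zpow_add₀ hp.ne', add_neg_cancel, zpow_zero]
    rw [setIntegral_congr_fun measurableSet_closedBall hχξ]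
    simp
  · obtain ⟨z, hz, hχz⟩ := hχ'
    have hξn' : (p : ℝ) ^ (n + 1) ≤ ‖ξ‖ := by
      rwa [norm_le_pow_iff_norm_lt_pow_add_one, not_lt] at hξn
    have hy : z / ξ ∈ closedBall (0 : ℚ_[p]) ((p : ℝ) ^ (-n)) := by
      rw [mem_closedBall_zero_iff, norm_div, div_le_iff₀ (norm_pos_iff.2 hξ)]
      calc ‖z‖ ≤ (p : ℝ) ^ (-n) * (p : ℝ) ^ (n + 1) := by
            rwa [← zpow_add₀ hp.ne', neg_add_cancel_left, zpow_one]
        _ ≤ (p : ℝ) ^ (-n) * ‖ξ‖ := by gcongr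
    exact AddChar.setIntegral_addSubgroup_eq_zero (χ.mulShift ξ)
      (IsUltrametricDist.closedBall_openAddSubgroup ℚ_[p] (zpow_pos hp (-n))) hy
      (by rwa [AddChar.mulShift_apply, mul_div_cancel₀ _ hξ])

open Classical in
theorem hasSum_setIntegral_closedBall_addChar_mul (hμ : μ (closedBall 0 1) = 1)
    (χ : AddChar ℚ_[p] ℂ) (hχ : ∀ x : ℚ_[p], ‖x‖ ≤ 1 → χ x = 1) (ξ : ℚ_[p]) :
    HasSum (fun n : ℕ => ∫ x in closedBall 0 ((p : ℝ) ^ (-((n + 1 : ℕ) : ℤ))), χ (ξ * x) ∂μ)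
      (∫ x, (if ‖x‖ ≤ 1 ∧ x ≠ 0 then (x.valuation : ℂ) else 0) * χ (ξ * x) ∂μ) := by
  set B : ℕ → Set ℚ_[p] := fun n => closedBall 0 ((p : ℝ) ^ (-((n + 1 : ℕ) : ℤ)))
  have hB (n : ℕ) : MeasurableSet (B n) := measurableSet_closedBall
  have hint (n : ℕ) : Integrable ((B n).indicator fun x => χ (ξ * x)) μ :=
    (((continuous_addChar χ hχ).comp (continuous_const_mul ξ)).continuousOn.integrableOn_compact
      (isCompact_closedBall _ _)).integrable_indicator (hB n)
  have hnorm (n : ℕ) :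
      ∫ x, ‖(B n).indicator (fun x => χ (ξ * x)) x‖ ∂μ = (p : ℝ)⁻¹ ^ (n + 1) := by
    simp_rw [norm_indicator_eq_indicator_norm, norm_addChar_eq_one χ hχ]
    rw [integral_indicator (hB n), setIntegral_const, smul_eq_mul, mul_one, inv_pow,
      ← zpow_natCast, ← zpow_neg]
    exact measureReal_closedBall_zpow μ hμ (n + 1)
  have hsum := hasSum_integral_of_summable_integral_norm hint <| by
    simp_rw [hnorm]
    exact (summable_nat_add_iff 1).2 <| summable_geometric_of_lt_one (by positivity)
      (inv_lt_one_of_one_lt₀ (mod_cast (Fact.out : p.Prime).one_lt))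
  simp_rw [integral_indicator (hB _)] at hsum
  have hF : (fun x => (if ‖x‖ ≤ 1 ∧ x ≠ 0 then (x.valuation : ℂ) else 0) * χ (ξ * x)) =
      fun x => ∑' n, (B n).indicator (fun x => χ (ξ * x)) x := by
    ext x
    rw [ite_valuation_eq_tsum_indicator, ← tsum_mul_right]
    simp only [Set.indicator_apply, Pi.one_apply, ite_mul, one_mul, zero_mul, B]
  rwa [hF]

end Haar

end Padic

open MeasureTheory Classical in
theorem stmt_6_general (p : ℕ) [Fact p.Prime]
    [MeasurableSpace ℚ_[p]] [BorelSpace ℚ_[p]]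
    (μ : Measure ℚ_[p]) [μ.IsAddHaarMeasure]
    (hμ : μ {x : ℚ_[p] | ‖x‖ ≤ 1} = 1)
    (ψ : ℚ_[p] → ℂ)
    (hψadd : ∀ x y : ℚ_[p], ψ (x + y) = ψ x * ψ y)
    (hψtriv : ∀ x : ℚ_[p], ‖x‖ ≤ 1 → ψ x = 1)
    (hψnontriv : ∃ x : ℚ_[p], ‖x‖ ≤ p ∧ ψ x ≠ 1) :
    ∀ ξ : ℚ_[p], ξ ≠ 0 →
      ∫ x : ℚ_[p],
          (if ‖x‖ ≤ 1 ∧ x ≠ 0 then (x.valuation : ℂ) else 0) * ψ (ξ * x) ∂μ =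
        (((1 - (p : ℝ)⁻¹)⁻¹ * min (p : ℝ)⁻¹ ‖ξ‖⁻¹ : ℝ) : ℂ) := by
  intro ξ hξ
  let χ : AddChar ℚ_[p] ℂ :=
    { toFun := ψ, map_zero_eq_one' := hψtriv 0 (by simp), map_add_eq_mul' := hψadd }
  have hμ' : μ (closedBall 0 1) = 1 := by simpa [closedBall, dist_eq_norm] using hμ
  have h := Padic.hasSum_setIntegral_closedBall_addChar_mul μ hμ' χ hψtriv ξ
  simp_rw [Padic.setIntegral_addChar_mul_closedBall μ χ hψtriv hψnontriv hξ,
    Padic.measureReal_closedBall_zpow μ hμ'] at h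
  exact h.unique (Complex.hasSum_ofReal.2 (Padic.hasSum_ite_norm_le_zpow hξ))

open MeasureTheory Classical in
/-- For a prime `p`, the Fourier transform on `ℚ_p` (with respect to a standard
additive character `ψ` trivial exactly on `ℤ_p` and the Haar measure giving
`ℤ_p` volume `1`) of `x ↦ val_p(x)·1_{ℤ_p}(x)` is
`ξ ↦ (1 − p⁻¹)⁻¹ · min (p⁻¹) (|ξ|⁻¹)` (for `ξ ≠ 0`). -/
theorem stmt_6 (p : ℕ) [Fact p.Prime]
    [MeasurableSpace ℚ_[p]] [BorelSpace ℚ_[p]]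
    (μ : Measure ℚ_[p]) [μ.IsAddHaarMeasure]
    (hμ : μ {x : ℚ_[p] | ‖x‖ ≤ 1} = 1)
    (ψ : ℚ_[p] → ℂ) (hψcont : Continuous ψ)
    (hψadd : ∀ x y : ℚ_[p], ψ (x + y) = ψ x * ψ y)
    (hψtriv : ∀ x : ℚ_[p], ‖x‖ ≤ 1 → ψ x = 1)
    (hψnontriv : ∃ x : ℚ_[p], ‖x‖ ≤ p ∧ ψ x ≠ 1) :
    ∀ ξ : ℚ_[p], ξ ≠ 0 →
      ∫ x : ℚ_[p],
          (if ‖x‖ ≤ 1 ∧ x ≠ 0 then (x.valuation : ℂ) else 0) * ψ (ξ * x) ∂μ =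
        (((1 - (p : ℝ)⁻¹)⁻¹ * min (p : ℝ)⁻¹ ‖ξ‖⁻¹ : ℝ) : ℂ) :=
  stmt_6_general p μ hμ ψ hψadd hψtriv hψnontriv
end

section
/- Let p be a prime, m a natural number, and μ the Haar measure on Q_p with μ(Z_p) = 1. Then p^{−m} · ∫_{{u ∈ Q_p : 1 < |u|_p ≤ p^m}} (−val_p(u)) dμ(u) = m − 1/(p−1) + p^{−m}/(p−1). -/
/-!
A Haar measure with `μ(ℤ_p) = 1` gives the ball `‖u‖ ≤ p^n` measure `p^n`: that ball is the
disjoint union of the `p` translates of the ball of radius `p^(n-1)` centred at `a p^(-n)`,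
`0 ≤ a < p`. The annulus `1 < ‖u‖ ≤ p^m` is the disjoint union of the spheres `‖u‖ = p^(j+1)`,
`j < m`, on which `-val_p u = j + 1` and which have measure `p^(j+1) - p^j`. Summing by parts,
the integral is `m p^m - (1 + p + ⋯ + p^(m-1))`.
-/

open MeasureTheory Metric

theorem Finset.sum_range_add_one_mul_pow_succ_sub_pow {R : Type*} [CommRing R] (x : R) (m : ℕ) :
    ∑ j ∈ range m, ((j : R) + 1) * (x ^ (j + 1) - x ^ j) = m * x ^ m - ∑ j ∈ range m, x ^ j := by
  induction m with
  | zero => simp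
  | succ m ih =>
    rw [sum_range_succ, ih, sum_range_succ]
    push_cast
    ring

namespace Padic

variable {p : ℕ} [Fact p.Prime]

theorem exists_natCast_norm_sub_lt_one {x : ℚ_[p]} (hx : ‖x‖ ≤ 1) :
    ∃ a < p, ‖x - a‖ < 1 := by
  obtain ⟨a, hap, ha⟩ := PadicInt.exists_mem_range (⟨x, hx⟩ : ℤ_[p])
  rw [IsLocalRing.mem_maximalIdeal, PadicInt.mem_nonunits] at ha
  exact ⟨a, hap, ha⟩

theorem inv_lt_norm_natCast_sub_natCast {a b : ℕ} (ha : a < p) (hb : b < p) (hab : a ≠ b) :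
    (p : ℝ)⁻¹ < ‖(a - b : ℚ_[p])‖ := by
  rw [← not_le, ← zpow_neg_one, ← zero_sub, ← norm_lt_pow_iff_norm_le_pow_sub_one, zpow_zero,
    show (a - b : ℚ_[p]) = ((a - b : ℤ) : ℚ_[p]) by push_cast; rfl, norm_intCast_lt_one_iff]
  intro hdvd
  have := Int.eq_zero_of_abs_lt_dvd hdvd (abs_lt.mpr ⟨by omega, by omega⟩)
  omega

theorem norm_mul_p_zpow (x : ℚ_[p]) (n : ℤ) : ‖x * (p : ℚ_[p]) ^ n‖ = ‖x‖ * (p : ℝ) ^ (-n) := by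
  rw [norm_mul, norm_p_zpow]

theorem closedBall_zpow_add_one_eq_biUnion (n : ℤ) :
    closedBall (0 : ℚ_[p]) ((p : ℝ) ^ (n + 1)) =
      ⋃ a ∈ Finset.range p, closedBall ((a : ℚ_[p]) * (p : ℚ_[p]) ^ (-(n + 1))) ((p : ℝ) ^ n) := by
  have hp₀ : (p : ℚ_[p]) ≠ 0 := Nat.cast_ne_zero.mpr (Fact.out : p.Prime).ne_zero
  have hpR : (0 : ℝ) < p := Nat.cast_pos.mpr (Fact.out : p.Prime).pos
  ext x
  simp only [mem_closedBall, dist_eq_norm, sub_zero, Set.mem_iUnion, Finset.mem_range, exists_prop]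
  constructor
  · intro hx
    have hy : ‖x * (p : ℚ_[p]) ^ (n + 1)‖ ≤ 1 := by
      rw [norm_mul_p_zpow, zpow_neg, ← div_eq_mul_inv, div_le_one (zpow_pos hpR _)]
      exact hx
    obtain ⟨a, hap, ha⟩ := exists_natCast_norm_sub_lt_one hy
    refine ⟨a, hap, ?_⟩
    rw [← zpow_zero (p : ℝ), norm_lt_pow_iff_norm_le_pow_sub_one, zero_sub] at ha
    calc ‖x - a * (p : ℚ_[p]) ^ (-(n + 1))‖
        = ‖x * (p : ℚ_[p]) ^ (n + 1) - a‖ * (p : ℝ) ^ (n + 1) := by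
          rw [← neg_neg (n + 1), ← norm_mul_p_zpow, sub_mul, mul_assoc, ← zpow_add₀ hp₀]
          simp
      _ ≤ (p : ℝ) ^ (-1 : ℤ) * (p : ℝ) ^ (n + 1) := by gcongr
      _ = (p : ℝ) ^ n := by rw [← zpow_add₀ hpR.ne']; congr 1; ring
  · rintro ⟨a, -, ha⟩
    have hc : ‖(a : ℚ_[p]) * (p : ℚ_[p]) ^ (-(n + 1))‖ ≤ (p : ℝ) ^ (n + 1) := by
      rw [norm_mul_p_zpow, neg_neg]
      exact mul_le_of_le_one_left (zpow_pos hpR _).le (IsUltrametricDist.norm_natCast_le_one ℚ_[p] a)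
    calc ‖x‖ = ‖(x - a * (p : ℚ_[p]) ^ (-(n + 1))) + a * (p : ℚ_[p]) ^ (-(n + 1))‖ := by
          rw [sub_add_cancel]
      _ ≤ _ := (nonarchimedean _ _).trans (max_le (ha.trans ?_) hc)
    exact zpow_le_zpow_right₀ (by exact_mod_cast (Fact.out : p.Prime).one_le) (by omega)

theorem pairwiseDisjoint_closedBall_natCast_mul (n : ℤ) :
    (Finset.range p : Set ℕ).PairwiseDisjoint
      fun a ↦ closedBall ((a : ℚ_[p]) * (p : ℚ_[p]) ^ (-(n + 1))) ((p : ℝ) ^ n) := by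
  have hp : (0 : ℝ) < p := Nat.cast_pos.mpr (Fact.out : p.Prime).pos
  intro a ha b hb hab
  refine (IsUltrametricDist.closedBall_eq_or_disjoint _ _ _).resolve_left fun h ↦ ?_
  have hmem := h ▸ mem_closedBall_self (zpow_pos hp n).le
  rw [mem_closedBall, dist_eq_norm, ← sub_mul, norm_mul_p_zpow, neg_neg] at hmem
  have hlt : (p : ℝ) ^ n < ‖(a - b : ℚ_[p])‖ * (p : ℝ) ^ (n + 1) := by
    calc (p : ℝ) ^ n = (p : ℝ)⁻¹ * (p : ℝ) ^ (n + 1) := by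
          rw [← zpow_neg_one, ← zpow_add₀ hp.ne']; congr 1; ring
      _ < _ := by
          gcongr
          exact inv_lt_norm_natCast_sub_natCast (by simpa using ha) (by simpa using hb) hab
  exact hlt.not_ge hmem

theorem sphere_zpow_add_one_eq_sdiff (n : ℤ) :
    sphere (0 : ℚ_[p]) ((p : ℝ) ^ (n + 1)) =
      closedBall 0 ((p : ℝ) ^ (n + 1)) \ closedBall 0 ((p : ℝ) ^ n) := by
  ext x
  simp only [mem_sphere_zero_iff_norm, Set.mem_sdiff, mem_closedBall_zero_iff,
    norm_le_pow_iff_norm_lt_pow_add_one x n, not_lt]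
  exact le_antisymm_iff

theorem valuation_eq_neg_of_norm_eq_zpow {x : ℚ_[p]} {n : ℤ} (hx : ‖x‖ = (p : ℝ) ^ n) :
    x.valuation = -n := by
  have hp : (1 : ℝ) < p := Nat.one_lt_cast.mpr (Fact.out : p.Prime).one_lt
  have hx0 : x ≠ 0 := by
    rintro rfl
    exact (zpow_pos (zero_lt_one.trans hp) n).ne (by simpa using hx)
  rw [norm_eq_zpow_neg_valuation hx0] at hx
  linarith [zpow_right_injective₀ (zero_lt_one.trans hp) hp.ne' hx]

theorem setOf_one_lt_norm_le_zpow_eq_biUnion_sphere (m : ℕ) :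
    {u : ℚ_[p] | 1 < ‖u‖ ∧ ‖u‖ ≤ (p : ℝ) ^ (m : ℤ)} =
      ⋃ j ∈ Finset.range m, sphere 0 ((p : ℝ) ^ ((j : ℤ) + 1)) := by
  have hp : (1 : ℝ) < p := Nat.one_lt_cast.mpr (Fact.out : p.Prime).one_lt
  ext u
  simp only [Set.mem_ofPred_eq, Set.mem_iUnion, Finset.mem_range, mem_sphere_zero_iff_norm,
    exists_prop]
  constructor
  · rintro ⟨h1, h2⟩
    have hu : u ≠ 0 := by rintro rfl; norm_num at h1
    rw [norm_eq_zpow_neg_valuation hu] at h1 h2 ⊢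
    have hpos : 0 < -u.valuation := (one_lt_zpow_iff_right₀ hp).mp h1
    have hle : -u.valuation ≤ m := (zpow_le_zpow_iff_right₀ hp).mp h2
    exact ⟨(-u.valuation - 1).toNat, by omega, by congr 1; omega⟩
  · rintro ⟨j, hj, h⟩
    rw [h]
    exact ⟨one_lt_zpow₀ hp (by omega), zpow_le_zpow_right₀ hp.le (by omega)⟩

theorem pairwiseDisjoint_sphere_zpow (s : Set ℕ) :
    s.PairwiseDisjoint fun j : ℕ ↦ sphere (0 : ℚ_[p]) ((p : ℝ) ^ ((j : ℤ) + 1)) := by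
  have hp : (1 : ℝ) < p := Nat.one_lt_cast.mpr (Fact.out : p.Prime).one_lt
  intro a _ b _ hab
  refine Set.disjoint_left.mpr fun u ha hb ↦ hab ?_
  rw [mem_sphere_zero_iff_norm] at ha hb
  have := zpow_right_injective₀ (zero_lt_one.trans hp) hp.ne' (ha.symm.trans hb)
  omega

variable [MeasurableSpace ℚ_[p]] [BorelSpace ℚ_[p]] (μ : Measure ℚ_[p]) [μ.IsAddHaarMeasure]

theorem measure_closedBall_zpow_add_one (n : ℤ) :
    μ (closedBall 0 ((p : ℝ) ^ (n + 1))) = p * μ (closedBall 0 ((p : ℝ) ^ n)) := by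
  rw [closedBall_zpow_add_one_eq_biUnion, measure_biUnion_finset
    (pairwiseDisjoint_closedBall_natCast_mul n) fun _ _ ↦ measurableSet_closedBall]
  simp_rw [Measure.addHaar_closedBall_center]
  simp

theorem measure_closedBall_pow (n : ℕ) :
    μ (closedBall 0 ((p : ℝ) ^ n)) = p ^ n * μ (closedBall 0 1) := by
  induction n with
  | zero => simp
  | succ n ih =>
    rw [← zpow_natCast, Nat.cast_succ, measure_closedBall_zpow_add_one, zpow_natCast, ih, pow_succ]
    ring

theorem measureReal_closedBall_pow (hμ : μ (closedBall 0 1) = 1) (n : ℕ) :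
    μ.real (closedBall 0 ((p : ℝ) ^ n)) = (p : ℝ) ^ n := by
  simp [measureReal_def, measure_closedBall_pow, hμ]

theorem setIntegral_sphere_neg_valuation (hμ : μ (closedBall 0 1) = 1) (j : ℕ) :
    ∫ u in sphere 0 ((p : ℝ) ^ ((j : ℤ) + 1)), -(u.valuation : ℝ) ∂μ =
      (j + 1) * ((p : ℝ) ^ (j + 1) - (p : ℝ) ^ j) := by
  have hp : (1 : ℝ) ≤ p := Nat.one_le_cast.mpr (Fact.out : p.Prime).one_le
  have hval : Set.EqOn (fun u : ℚ_[p] ↦ -(u.valuation : ℝ)) (fun _ ↦ (j : ℝ) + 1)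
      (sphere 0 ((p : ℝ) ^ ((j : ℤ) + 1))) := fun u hu ↦ by
    simp [valuation_eq_neg_of_norm_eq_zpow (mem_sphere_zero_iff_norm.mp hu)]
  rw [setIntegral_congr_fun isClosed_sphere.measurableSet hval, setIntegral_const,
    sphere_zpow_add_one_eq_sdiff, measureReal_sdiff
      (closedBall_subset_closedBall (zpow_le_zpow_right₀ hp (by omega))) measurableSet_closedBall
      (isCompact_closedBall _ _).measure_lt_top.ne,
    ← Nat.cast_succ, zpow_natCast, zpow_natCast, measureReal_closedBall_pow μ hμ,
    measureReal_closedBall_pow μ hμ, smul_eq_mul, mul_comm]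

theorem integrableOn_sphere_neg_valuation (n : ℤ) :
    IntegrableOn (fun u : ℚ_[p] ↦ -(u.valuation : ℝ)) (sphere 0 ((p : ℝ) ^ n)) μ :=
  (integrableOn_const (C := (n : ℝ)) (isCompact_sphere _ _).measure_lt_top.ne).congr_fun
    (fun u hu ↦ by simp [valuation_eq_neg_of_norm_eq_zpow (mem_sphere_zero_iff_norm.mp hu)])
    isClosed_sphere.measurableSet

end Padic

/-- For a prime `p`, `m : ℕ` and the Haar measure `μ` on `ℚ_p` with
`μ(ℤ_p) = 1`, one has
`p^{−m} · ∫_{{u : 1 < |u| ≤ p^m}} (−val_p(u)) dμ(u) = m − 1/(p−1) + p^{−m}/(p−1)`. -/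
theorem stmt_17 (p : ℕ) [Fact p.Prime] (m : ℕ)
    [MeasurableSpace ℚ_[p]] [BorelSpace ℚ_[p]]
    (μ : Measure ℚ_[p]) [μ.IsAddHaarMeasure]
    (hμ : μ {x : ℚ_[p] | ‖x‖ ≤ 1} = 1) :
    (p : ℝ) ^ (-(m : ℤ)) *
        ∫ u in {u : ℚ_[p] | 1 < ‖u‖ ∧ ‖u‖ ≤ (p : ℝ) ^ (m : ℤ)},
          (-(u.valuation : ℝ)) ∂μ =
      (m : ℝ) - 1 / ((p : ℝ) - 1) + (p : ℝ) ^ (-(m : ℤ)) / ((p : ℝ) - 1) := by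
  have hp : (1 : ℝ) < p := Nat.one_lt_cast.mpr (Fact.out : p.Prime).one_lt
  have hμ_ball : μ (closedBall 0 1) = 1 := by
    rw [← hμ]; congr 1; ext; simp
  rw [Padic.setOf_one_lt_norm_le_zpow_eq_biUnion_sphere, integral_biUnion_finset _
      (fun _ _ ↦ isClosed_sphere.measurableSet) (Padic.pairwiseDisjoint_sphere_zpow _)
      (fun _ _ ↦ Padic.integrableOn_sphere_neg_valuation μ _),
    Finset.sum_congr rfl fun j _ ↦ Padic.setIntegral_sphere_neg_valuation μ hμ_ball j,
    Finset.sum_range_add_one_mul_pow_succ_sub_pow, geom_sum_eq hp.ne', zpow_neg, zpow_natCast]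
  have : (p : ℝ) - 1 ≠ 0 := sub_ne_zero.mpr hp.ne'
  field_simp
  ring
end
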